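/- arXiv:1208.5171 — 4 statements merged into one kernel-verified Lean document; each statement's English description precedes it below -/
import Mathlib

section
/- Let a, b be nonnegative reals satisfying a² + b² - 2a - 2b - 2ab + 1 ≤ 0. Then √a + √b ≥ 1 and |√a - √b| ≤ 1. -/
/-! With `x = √a` and `y = √b` the hypothesis reads `((x - y)² - 1)((x + y)² - 1) ≤ 0`.
Since `x, y ≥ 0` we have `(x - y)² ≤ (x + y)²`, so the smaller factor is `≤ 0` and the larger
one `≥ 0`, i.e. `(x - y)² ≤ 1 ≤ (x + y)²`. -/

theorem quartic_eq_mul_sub_sq_sub_one_add_sq_sub_one {R : Type*} [CommRing R] (x y : R) :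
    (x ^ 2) ^ 2 + (y ^ 2) ^ 2 - 2 * x ^ 2 - 2 * y ^ 2 - 2 * x ^ 2 * y ^ 2 + 1 =
      ((x - y) ^ 2 - 1) * ((x + y) ^ 2 - 1) := by
  ring

theorem le_and_le_of_mul_sub_nonpos {R : Type*} [Ring R] [LinearOrder R] [IsStrictOrderedRing R]
    {p q c : R} (hpq : p ≤ q) (h : (p - c) * (q - c) ≤ 0) : p ≤ c ∧ c ≤ q := by
  rcases mul_nonpos_iff.mp h with ⟨hp, hq⟩ | ⟨hp, hq⟩
  · exact ⟨hpq.trans (sub_nonpos.mp hq), (sub_nonneg.mp hp).trans hpq⟩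
  · exact ⟨sub_nonpos.mp hp, sub_nonneg.mp hq⟩

theorem sub_sq_le_add_sq {R : Type*} [CommRing R] [LinearOrder R] [IsStrictOrderedRing R]
    {x y : R} (hx : 0 ≤ x) (hy : 0 ≤ y) : (x - y) ^ 2 ≤ (x + y) ^ 2 := by
  nlinarith [mul_nonneg hx hy]

theorem stmt_0 (a b : ℝ) (ha : 0 ≤ a) (hb : 0 ≤ b)
    (h : a ^ 2 + b ^ 2 - 2 * a - 2 * b - 2 * a * b + 1 ≤ 0) :
    1 ≤ Real.sqrt a + Real.sqrt b ∧ |Real.sqrt a - Real.sqrt b| ≤ 1 := by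
  set x := Real.sqrt a
  set y := Real.sqrt b
  have hx : 0 ≤ x := Real.sqrt_nonneg a
  have hy : 0 ≤ y := Real.sqrt_nonneg b
  rw [← Real.sq_sqrt ha, ← Real.sq_sqrt hb, quartic_eq_mul_sub_sq_sub_one_add_sq_sub_one] at h
  obtain ⟨hdiff, hsum⟩ := le_and_le_of_mul_sub_nonpos (sub_sq_le_add_sq hx hy) h
  refine ⟨?_, sq_le_one_iff_abs_le_one _ |>.mp hdiff⟩
  simpa [abs_of_nonneg (add_nonneg hx hy)] using one_le_sq_iff_one_le_abs _ |>.mp hsum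
end

section
/- Define on ℂⁿ × ℝ the gauge |(ζ,v)| = | -‖ζ‖² + iv |^{1/2} (Euclidean modulus of the complex number -‖ζ‖² + iv, raised to 1/2) and the Heisenberg group law (ζ,v)*(ζ',v') = (ζ+ζ', v+v'+2Im⟨ζ',ζ⟩) with inverse (ζ,v)⁻¹ = (-ζ,-v). Then d((ζ,v),(ζ',v')) = |(ζ,v)⁻¹*(ζ',v')| defines a metric on ℂⁿ × ℝ (the Korányi–Cygan metric); in particular it satisfies the triangle inequality. -/
/-!
Writing `K(p, q) = ‖ζ‖² + ‖ζ'‖² + i(v - v') - 2⟪ζ, ζ'⟫` for `p = (ζ, v)`, `q = (ζ', v')`, one has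
`d(p, q)² = |K(p, q)|`, `Re K(p, q) = ‖ζ - ζ'‖²` and `K(q, p) = conj K(p, q)`. The triangle
inequality comes from the cocycle identity `K(p, r) = K(p, q) + K(q, r) - 2⟪ζ - η, ξ - η⟫`
(for `q = (η, ·)`, `r = (ξ, ·)`): by Cauchy–Schwarz the last term is at most
`2 ‖ζ - η‖ ‖ξ - η‖ ≤ 2 d(p, q) d(q, r)`, so `d(p, r)² ≤ (d(p, q) + d(q, r))²`.
-/

open scoped ComplexInnerProductSpace in
/-- The Korányi–Cygan gauge on the Heisenberg group `ℂⁿ × ℝ`. -/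
noncomputable def heisGauge {n : ℕ} (p : EuclideanSpace ℂ (Fin n) × ℝ) : ℝ :=
  ‖((-‖p.1‖ ^ 2 : ℝ) : ℂ) + (p.2 : ℂ) * Complex.I‖ ^ ((1 : ℝ) / 2)

/-- The Heisenberg group law on `ℂⁿ × ℝ`. -/
noncomputable def heisMul {n : ℕ} (p q : EuclideanSpace ℂ (Fin n) × ℝ) :
    EuclideanSpace ℂ (Fin n) × ℝ :=
  (p.1 + q.1, p.2 + q.2 + 2 * (inner ℂ q.1 p.1 : ℂ).im)

/-- Inversion in the Heisenberg group. -/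
def heisInv {n : ℕ} (p : EuclideanSpace ℂ (Fin n) × ℝ) : EuclideanSpace ℂ (Fin n) × ℝ :=
  (-p.1, -p.2)

/-- The Korányi–Cygan metric. -/
noncomputable def heisDist {n : ℕ} (p q : EuclideanSpace ℂ (Fin n) × ℝ) : ℝ :=
  heisGauge (heisMul (heisInv p) q)

open scoped InnerProductSpace

section CyganKernel

variable {E : Type*} [NormedAddCommGroup E] [InnerProductSpace ℂ E]

noncomputable def cyganKernel (p q : E × ℝ) : ℂ :=
  ((‖p.1‖ ^ 2 + ‖q.1‖ ^ 2 : ℝ) : ℂ) + ((p.2 - q.2 : ℝ) : ℂ) * Complex.I - 2 * ⟪p.1, q.1⟫_ℂ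

lemma inner_self_eq_ofReal_norm_sq (x : E) : ⟪x, x⟫_ℂ = ((‖x‖ ^ 2 : ℝ) : ℂ) := by
  simp [inner_self_eq_norm_sq_to_K]

lemma cyganKernel_re (p q : E × ℝ) : (cyganKernel p q).re = ‖p.1 - q.1‖ ^ 2 := by
  rw [cyganKernel, norm_sub_sq (𝕜 := ℂ)]
  simp only [Complex.sub_re, Complex.add_re, Complex.mul_re, Complex.ofReal_re, Complex.ofReal_im,
    Complex.I_re, Complex.I_im, Complex.re_ofNat, Complex.im_ofNat, RCLike.re_to_complex]
  ring

lemma cyganKernel_im (p q : E × ℝ) :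
    (cyganKernel p q).im = p.2 - q.2 - 2 * (⟪p.1, q.1⟫_ℂ).im := by
  simp only [cyganKernel, Complex.sub_im, Complex.add_im, Complex.mul_im, Complex.ofReal_re,
    Complex.ofReal_im, Complex.I_re, Complex.I_im, Complex.re_ofNat, Complex.im_ofNat]
  ring

lemma cyganKernel_self (p : E × ℝ) : cyganKernel p p = 0 := by
  apply Complex.ext
  · simp [cyganKernel_re]
  · rw [cyganKernel_im, inner_self_eq_ofReal_norm_sq, Complex.ofReal_im]
    simp

lemma cyganKernel_swap (p q : E × ℝ) : cyganKernel q p = (starRingEnd ℂ) (cyganKernel p q) := by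
  apply Complex.ext
  · simp only [cyganKernel_re, Complex.conj_re, norm_sub_rev]
  · rw [Complex.conj_im, cyganKernel_im, cyganKernel_im, ← inner_conj_symm, Complex.conj_im]
    ring

lemma cyganKernel_eq_zero_iff {p q : E × ℝ} : cyganKernel p q = 0 ↔ p = q := by
  refine ⟨fun h => ?_, fun h => h ▸ cyganKernel_self p⟩
  have h₁ : p.1 = q.1 := by
    have hre := congrArg Complex.re h
    rwa [cyganKernel_re, Complex.zero_re, sq_eq_zero_iff, norm_eq_zero, sub_eq_zero] at hre
  have him := congrArg Complex.im h
  rw [cyganKernel_im, h₁, inner_self_eq_ofReal_norm_sq, Complex.ofReal_im, Complex.zero_im] at him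
  exact Prod.ext h₁ (by linarith)

lemma cyganKernel_cocycle (p q r : E × ℝ) :
    cyganKernel p r = cyganKernel p q + cyganKernel q r - 2 * ⟪p.1 - q.1, r.1 - q.1⟫_ℂ := by
  simp only [cyganKernel, inner_sub_left, inner_sub_right, inner_self_eq_ofReal_norm_sq]
  push_cast
  ring

lemma norm_sub_le_sqrt_norm_cyganKernel (p q : E × ℝ) :
    ‖p.1 - q.1‖ ≤ √‖cyganKernel p q‖ := by
  rw [Real.le_sqrt (norm_nonneg _) (norm_nonneg _), ← cyganKernel_re]
  exact Complex.re_le_norm _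

lemma sqrt_norm_cyganKernel_le_add (p q r : E × ℝ) :
    √‖cyganKernel p r‖ ≤ √‖cyganKernel p q‖ + √‖cyganKernel q r‖ := by
  set a := ‖cyganKernel p q‖
  set c := ‖cyganKernel q r‖
  have hcross : ‖⟪p.1 - q.1, r.1 - q.1⟫_ℂ‖ ≤ √a * √c := by
    calc ‖⟪p.1 - q.1, r.1 - q.1⟫_ℂ‖ ≤ ‖p.1 - q.1‖ * ‖r.1 - q.1‖ := norm_inner_le_norm _ _
      _ ≤ √a * √c := by
        rw [norm_sub_rev r.1]
        gcongr
        exacts [norm_sub_le_sqrt_norm_cyganKernel p q, norm_sub_le_sqrt_norm_cyganKernel q r]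
  rw [Real.sqrt_le_left (by positivity), cyganKernel_cocycle p q r]
  calc ‖cyganKernel p q + cyganKernel q r - 2 * ⟪p.1 - q.1, r.1 - q.1⟫_ℂ‖
      ≤ a + c + 2 * ‖⟪p.1 - q.1, r.1 - q.1⟫_ℂ‖ := by
        refine (norm_sub_le _ _).trans ?_
        rw [norm_mul, Complex.norm_ofNat]
        gcongr
        exact norm_add_le _ _
    _ ≤ a + c + 2 * (√a * √c) := by gcongr
    _ = (√a + √c) ^ 2 := by
        rw [add_sq, Real.sq_sqrt (norm_nonneg _), Real.sq_sqrt (norm_nonneg _)]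
        ring

end CyganKernel

lemma heisDist_eq_sqrt_norm_cyganKernel {n : ℕ} (p q : EuclideanSpace ℂ (Fin n) × ℝ) :
    heisDist p q = √‖cyganKernel p q‖ := by
  have hgauge : ((-‖-p.1 + q.1‖ ^ 2 : ℝ) : ℂ)
      + ((-p.2 + q.2 + 2 * (⟪q.1, -p.1⟫_ℂ).im : ℝ) : ℂ) * Complex.I = -cyganKernel p q := by
    apply Complex.ext
    · simp only [Complex.add_re, Complex.mul_re, Complex.ofReal_re, Complex.ofReal_im,
        Complex.I_re, Complex.I_im, Complex.neg_re, cyganKernel_re, neg_add_eq_sub, norm_sub_rev]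
      ring
    · rw [Complex.neg_im, cyganKernel_im, inner_neg_right, ← inner_conj_symm]
      simp only [Complex.add_im, Complex.mul_im, Complex.ofReal_re, Complex.ofReal_im,
        Complex.I_re, Complex.I_im, Complex.neg_im, Complex.conj_im]
      ring
  rw [heisDist, heisMul, heisInv, heisGauge, hgauge, norm_neg, Real.sqrt_eq_rpow]

theorem stmt_3 {n : ℕ} :
    (∀ p : EuclideanSpace ℂ (Fin n) × ℝ, heisDist p p = 0) ∧
    (∀ p q : EuclideanSpace ℂ (Fin n) × ℝ, heisDist p q = 0 → p = q) ∧
    (∀ p q : EuclideanSpace ℂ (Fin n) × ℝ, heisDist p q = heisDist q p) ∧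
    (∀ p q r : EuclideanSpace ℂ (Fin n) × ℝ, heisDist p r ≤ heisDist p q + heisDist q r) := by
  simp only [heisDist_eq_sqrt_norm_cyganKernel]
  refine ⟨fun p => ?_, fun p q h => ?_, fun p q => ?_, sqrt_norm_cyganKernel_le_add⟩
  · simp [cyganKernel_self]
  · rwa [Real.sqrt_eq_zero (norm_nonneg _), norm_eq_zero, cyganKernel_eq_zero_iff] at h
  · rw [cyganKernel_swap, Complex.norm_conj]
end

section
/- Let ζ₂, ζ₃ ∈ ℂ^{n-1} and v₂, v₃ ∈ iℝ (purely imaginary), not both data trivial, defining X₁ = (-‖ζ₂‖²+v̄₂)·p⁻¹, X₂ = (-‖ζ₃‖²+v̄₃)·p̄⁻¹, X₃ = (-‖ζ₃‖²+v̄₃)(-‖ζ₂‖²+v̄₂)⁻¹, where p = -‖ζ₂‖² - ‖ζ₃‖² + 2⟨ζ₃,ζ₂⟩ + v̄₂ + v₃ ≠ 0 and the denominators -‖ζ₂‖²+v̄₂, -‖ζ₃‖²+v̄₃ are nonzero. Then 2|X₁|²Re(X₃) ≥ |X₁|² + |X₂|² - 2Re(X₁) - 2Re(X₂) + 1. -/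
/-!
Write `a = -‖ζ₂‖² + v̄₂`, `b = -‖ζ₃‖² + v̄₃` and `c = ⟨ζ₃, ζ₂⟩`, so that `p = a + b̄ + 2c`,
`X₁ = a / p`, `X₂ = b / p̄`, `X₃ = b / a`. Multiplied by `|p|²`, the difference of the two sides
of the inequality is the polynomial `4 Re a Re b - |p - a - b̄|² = 4 (‖ζ₂‖² ‖ζ₃‖² - |c|²)`,
which is nonnegative by Cauchy–Schwarz.
-/

open Complex ComplexConjugate

lemma normSq_mul_re_mul_inv (a b : ℂ) : normSq a * (b * a⁻¹).re = (b * conj a).re := by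
  rcases eq_or_ne a 0 with rfl | ha
  · simp
  · rw [inv_def, ← mul_assoc, re_mul_ofReal, mul_comm, inv_mul_cancel_right₀ (normSq_pos.2 ha).ne']

lemma normSq_mul_crossRatio_defect (a b p : ℂ) (hp : p ≠ 0) :
    normSq p * (2 * ‖a * p⁻¹‖ ^ 2 * (b * a⁻¹).re -
      (‖a * p⁻¹‖ ^ 2 + ‖b * (conj p)⁻¹‖ ^ 2 - 2 * (a * p⁻¹).re - 2 * (b * (conj p)⁻¹).re + 1))
      = 4 * a.re * b.re - normSq (p - a - conj b) := by
  have hap := normSq_mul_re_mul_inv p a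
  have hbp := normSq_mul_re_mul_inv (conj p) b
  have hba := normSq_mul_re_mul_inv a b
  rw [normSq_conj, conj_conj] at hbp
  have hN : normSq p ≠ 0 := (normSq_pos.2 hp).ne'
  calc _ = 2 * (b * conj a).re - (normSq a + normSq b - 2 * (a * conj p).re - 2 * (b * p).re
        + normSq p) := by
        simp only [Complex.sq_norm, map_mul, map_inv₀, normSq_conj, ← hap, ← hbp, ← hba]
        field_simp
    _ = _ := by simp only [normSq_apply, mul_re, conj_re, conj_im, sub_re, sub_im]; ring

lemma crossRatio_ineq_of_normSq_le {a b p : ℂ} (hp : p ≠ 0)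
    (h : normSq (p - a - conj b) ≤ 4 * a.re * b.re) :
    2 * ‖a * p⁻¹‖ ^ 2 * (b * a⁻¹).re ≥
      ‖a * p⁻¹‖ ^ 2 + ‖b * (conj p)⁻¹‖ ^ 2 - 2 * (a * p⁻¹).re - 2 * (b * (conj p)⁻¹).re + 1 := by
  have hdefect := normSq_mul_crossRatio_defect a b p hp
  rw [ge_iff_le, ← sub_nonneg]
  refine nonneg_of_mul_nonneg_right ?_ (normSq_pos.2 hp)
  linarith

lemma normSq_inner_le {E : Type*} [SeminormedAddCommGroup E] [InnerProductSpace ℂ E] (x y : E) :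
    normSq (inner ℂ x y) ≤ ‖x‖ ^ 2 * ‖y‖ ^ 2 := by
  rw [← Complex.sq_norm, ← mul_pow]
  gcongr
  exact norm_inner_le_norm x y

theorem stmt_9_general {m : ℕ} (ζ₂ ζ₃ : EuclideanSpace ℂ (Fin m)) (v₂ v₃ : ℂ)
    (hv₂ : v₂.re = 0) (hv₃ : v₃.re = 0)
    (p X₁ X₂ X₃ : ℂ)
    (hp : p = ((-‖ζ₂‖ ^ 2 : ℝ) : ℂ) + ((-‖ζ₃‖ ^ 2 : ℝ) : ℂ) + 2 * (inner ℂ ζ₃ ζ₂ : ℂ) +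
      (starRingEnd ℂ) v₂ + v₃)
    (hp0 : p ≠ 0)
    (hX₁ : X₁ = (((-‖ζ₂‖ ^ 2 : ℝ) : ℂ) + (starRingEnd ℂ) v₂) * p⁻¹)
    (hX₂ : X₂ = (((-‖ζ₃‖ ^ 2 : ℝ) : ℂ) + (starRingEnd ℂ) v₃) * ((starRingEnd ℂ) p)⁻¹)
    (hX₃ : X₃ = (((-‖ζ₃‖ ^ 2 : ℝ) : ℂ) + (starRingEnd ℂ) v₃) *
      (((-‖ζ₂‖ ^ 2 : ℝ) : ℂ) + (starRingEnd ℂ) v₂)⁻¹) :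
    2 * ‖X₁‖ ^ 2 * X₃.re ≥
      ‖X₁‖ ^ 2 + ‖X₂‖ ^ 2 - 2 * X₁.re - 2 * X₂.re + 1 := by
  subst hX₁ hX₂ hX₃
  apply crossRatio_ineq_of_normSq_le hp0
  have hpab : p - (((-‖ζ₂‖ ^ 2 : ℝ) : ℂ) + conj v₂) - conj (((-‖ζ₃‖ ^ 2 : ℝ) : ℂ) + conj v₃)
      = 2 * inner ℂ ζ₃ ζ₂ := by
    rw [hp, map_add, conj_ofReal, conj_conj]; ring
  rw [hpab, normSq_mul]
  simp only [add_re, ofReal_re, conj_re, hv₂, hv₃, add_zero, normSq_ofNat]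
  linear_combination 4 * normSq_inner_le ζ₃ ζ₂

/-- The fundamental cross--ratio inequality for a normalized quadruple
`(∞, (ζ₂,v₂), (ζ₃,v₃), 0)` in the boundary of complex hyperbolic space. -/
theorem stmt_9 {m : ℕ} (ζ₂ ζ₃ : EuclideanSpace ℂ (Fin m)) (v₂ v₃ : ℂ)
    (hv₂ : v₂.re = 0) (hv₃ : v₃.re = 0)
    (p X₁ X₂ X₃ : ℂ)
    (hp : p = ((-‖ζ₂‖ ^ 2 : ℝ) : ℂ) + ((-‖ζ₃‖ ^ 2 : ℝ) : ℂ) + 2 * (inner ℂ ζ₃ ζ₂ : ℂ) +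
      (starRingEnd ℂ) v₂ + v₃)
    (hp0 : p ≠ 0)
    (hd₂ : ((-‖ζ₂‖ ^ 2 : ℝ) : ℂ) + (starRingEnd ℂ) v₂ ≠ 0)
    (hd₃ : ((-‖ζ₃‖ ^ 2 : ℝ) : ℂ) + (starRingEnd ℂ) v₃ ≠ 0)
    (hX₁ : X₁ = (((-‖ζ₂‖ ^ 2 : ℝ) : ℂ) + (starRingEnd ℂ) v₂) * p⁻¹)
    (hX₂ : X₂ = (((-‖ζ₃‖ ^ 2 : ℝ) : ℂ) + (starRingEnd ℂ) v₃) * ((starRingEnd ℂ) p)⁻¹)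
    (hX₃ : X₃ = (((-‖ζ₃‖ ^ 2 : ℝ) : ℂ) + (starRingEnd ℂ) v₃) *
      (((-‖ζ₂‖ ^ 2 : ℝ) : ℂ) + (starRingEnd ℂ) v₂)⁻¹) :
    2 * ‖X₁‖ ^ 2 * X₃.re ≥
      ‖X₁‖ ^ 2 + ‖X₂‖ ^ 2 - 2 * X₁.re - 2 * X₂.re + 1 :=
  stmt_9_general ζ₂ ζ₃ v₂ v₃ hv₂ hv₃ p X₁ X₂ X₃ hp hp0 hX₁ hX₂ hX₃
end

section
/- Let X₁, X₂, X₃ be complex numbers with |X₂| = |X₁||X₃| and 2|X₁|²Re(X₃) ≥ |X₁|² + |X₂|² - 2Re(X₁) - 2Re(X₂) + 1. Then (|X₁|^{1/2} + |X₂|^{1/2})² ≥ 1 and (|X₁|^{1/2} - |X₂|^{1/2})² ≤ 1. -/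
/-!
Write `a = ‖X₁‖`, `b = ‖X₂‖`. Bounding each real part by the modulus turns the hypotheses into
`a² + b² - 2a - 2b + 1 ≤ 2ab`, which says exactly that
`((√a - √b)² - 1) * ((√a + √b)² - 1) ≤ 0`. As `(√a - √b)² ≤ (√a + √b)²`, the number `1` lies between them.
-/

lemma le_one_and_one_le_of_sub_one_mul_sub_one_nonpos {u v : ℝ} (huv : u ≤ v)
    (h : (u - 1) * (v - 1) ≤ 0) : u ≤ 1 ∧ 1 ≤ v := by
  constructor <;> nlinarith

lemma sq_sqrt_sub_sub_one_mul_sq_sqrt_add_sub_one {a b : ℝ} (ha : 0 ≤ a) (hb : 0 ≤ b) :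
    ((√a - √b) ^ 2 - 1) * ((√a + √b) ^ 2 - 1) = a ^ 2 + b ^ 2 - 2 * a * b - 2 * a - 2 * b + 1 := by
  calc ((√a - √b) ^ 2 - 1) * ((√a + √b) ^ 2 - 1)
      = (√a ^ 2 - √b ^ 2) ^ 2 - 2 * (√a ^ 2 + √b ^ 2) + 1 := by ring
    _ = a ^ 2 + b ^ 2 - 2 * a * b - 2 * a - 2 * b + 1 := by
      rw [Real.sq_sqrt ha, Real.sq_sqrt hb]; ring

lemma norm_sq_add_norm_sq_sub_two_mul_norm_le_of_re_le {X₁ X₂ X₃ : ℂ} (h1 : ‖X₂‖ = ‖X₁‖ * ‖X₃‖)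
    (h2 : ‖X₁‖ ^ 2 + ‖X₂‖ ^ 2 - 2 * X₁.re - 2 * X₂.re + 1 ≤ 2 * ‖X₁‖ ^ 2 * X₃.re) :
    ‖X₁‖ ^ 2 + ‖X₂‖ ^ 2 - 2 * ‖X₁‖ - 2 * ‖X₂‖ + 1 ≤ 2 * ‖X₁‖ * ‖X₂‖ := by
  have h3 : ‖X₁‖ ^ 2 * X₃.re ≤ ‖X₁‖ * ‖X₂‖ := by
    rw [h1, ← mul_assoc, ← sq]
    exact mul_le_mul_of_nonneg_left (Complex.re_le_norm X₃) (sq_nonneg _)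
  linarith [Complex.re_le_norm X₁, Complex.re_le_norm X₂]

theorem stmt_11 (X₁ X₂ X₃ : ℂ)
    (h1 : ‖X₂‖ = ‖X₁‖ * ‖X₃‖)
    (h2 : 2 * ‖X₁‖ ^ 2 * X₃.re ≥
      ‖X₁‖ ^ 2 + ‖X₂‖ ^ 2 - 2 * X₁.re - 2 * X₂.re + 1) :
    1 ≤ (Real.sqrt (‖X₁‖) + Real.sqrt (‖X₂‖)) ^ 2 ∧
    (Real.sqrt (‖X₁‖) - Real.sqrt (‖X₂‖)) ^ 2 ≤ 1 := by
  have hprod : ((√‖X₁‖ - √‖X₂‖) ^ 2 - 1) * ((√‖X₁‖ + √‖X₂‖) ^ 2 - 1) ≤ 0 := by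
    rw [sq_sqrt_sub_sub_one_mul_sq_sqrt_add_sub_one (norm_nonneg _) (norm_nonneg _)]
    linarith [norm_sq_add_norm_sq_sub_two_mul_norm_le_of_re_le h1 h2]
  have hle : (√‖X₁‖ - √‖X₂‖) ^ 2 ≤ (√‖X₁‖ + √‖X₂‖) ^ 2 := by
    nlinarith [Real.sqrt_nonneg ‖X₁‖, Real.sqrt_nonneg ‖X₂‖]
  exact (le_one_and_one_le_of_sub_one_mul_sub_one_nonpos hle hprod).symm
end
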